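/- arXiv:math/0405161 — 3 statements merged into one kernel-verified Lean document; each statement's English description precedes it below -/
import Mathlib

section
/- For every real λ > 0 and every random variable X having the Poisson distribution with parameter λ, one has E[exp(|X − λ| / 2)] ≤ 2·exp(3λ/20), where |X − λ| is the absolute value of (X : ℝ) − λ. -/
open MeasureTheory

/-- `X` has the Poisson distribution with parameter `lam` under `μ`. -/
def IsPoisson {Ω : Type} [MeasurableSpace Ω] (μ : Measure Ω) (X : Ω → ℕ) (lam : ℝ) : Prop :=
  ∀ k : ℕ, μ {ω | X ω = k} = ENNReal.ofReal (Real.exp (-lam) * lam ^ k / (Nat.factorial k))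

lemma exp_tsum' (x : ℝ) : ∑' k : ℕ, x ^ k / k.factorial = Real.exp x := by
  rw [Real.exp_eq_exp_ℝ, NormedSpace.exp_eq_tsum_div]

lemma exp_half_le : Real.exp (1/2 : ℝ) ≤ 1.65 := by
  have ha : Real.exp (1/2 : ℝ) * Real.exp (1/2 : ℝ) = Real.exp 1 := by
    rw [← Real.exp_add]; norm_num
  nlinarith [Real.exp_one_lt_d9, Real.exp_pos (1/2 : ℝ)]

lemma exp_neg_half_le : Real.exp (-(1/2) : ℝ) ≤ 0.65 := by
  have ha : Real.exp (1/2 : ℝ) * Real.exp (1/2 : ℝ) = Real.exp 1 := by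
    rw [← Real.exp_add]; norm_num
  have hb : Real.exp (-(1/2) : ℝ) * Real.exp (1/2 : ℝ) = 1 := by
    rw [← Real.exp_add]; norm_num
  nlinarith [Real.exp_one_gt_d9, Real.exp_pos (1/2 : ℝ), Real.exp_pos (-(1/2) : ℝ)]

theorem poisson_abs_mgf_bound (lam : ℝ) (hlam : 0 < lam)
    (Ω : Type) [MeasurableSpace Ω] (μ : Measure Ω) [IsProbabilityMeasure μ]
    (X : Ω → ℕ) (hX : IsPoisson μ X lam) :
    ∫⁻ ω, ENNReal.ofReal (Real.exp (|(X ω : ℝ) - lam| / 2)) ∂μ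
      ≤ ENNReal.ofReal (2 * Real.exp (3 * lam / 20)) := by
  set c : ℕ → ENNReal := fun k => ENNReal.ofReal (Real.exp (|(k : ℝ) - lam| / 2)) with hc
  set s : ℕ → Set Ω := fun k => {ω | X ω = k} with hs
  set t : ℕ → Set Ω := fun k => toMeasurable μ (s k) with ht
  set p : ℕ → ℝ := fun k => Real.exp (-lam) * lam ^ k / (Nat.factorial k) with hp
  set q : ℕ → ℝ := fun k =>
    p k * (Real.exp (((k : ℝ) - lam)/2) + Real.exp (-(((k : ℝ) - lam))/2)) with hq
  -- pointwise bound by a measurable tsum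
  have hle : ∀ ω, ENNReal.ofReal (Real.exp (|(X ω : ℝ) - lam| / 2))
      ≤ ∑' k, Set.indicator (t k) (fun _ => c k) ω := by
    intro ω
    have hω : ω ∈ t (X ω) := subset_toMeasurable μ _ rfl
    have h := ENNReal.le_tsum (f := fun k => Set.indicator (t k) (fun _ => c k) ω) (X ω)
    rwa [Set.indicator_of_mem hω] at h
  have hpnn : ∀ k, 0 ≤ p k := fun k => by
    have := Real.exp_pos (-lam)
    positivity
  have hqnn : ∀ k, 0 ≤ q k := fun k => by
    have h1 := (Real.exp_pos (((k : ℝ) - lam)/2)).le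
    have h2 := (Real.exp_pos (-(((k : ℝ) - lam))/2)).le
    have := hpnn k
    positivity
  -- rewrite q
  have e1 : ∀ (k : ℕ) (x : ℝ), Real.exp (((k : ℝ) - x)/2)
      = Real.exp (1/2 : ℝ) ^ k * Real.exp (-(x/2)) := by
    intro k x
    rw [← Real.exp_nat_mul, ← Real.exp_add]
    congr 1; ring
  have hqeq : ∀ k, q k = (Real.exp (-lam) * Real.exp (-(lam/2)))
        * (lam * Real.exp (1/2 : ℝ)) ^ k / (Nat.factorial k)
      + (Real.exp (-lam) * Real.exp (lam/2))
        * (lam * Real.exp (-(1/2) : ℝ)) ^ k / (Nat.factorial k) := by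
    intro k
    have h2 : Real.exp (-(((k : ℝ) - lam))/2)
        = Real.exp (-(1/2) : ℝ) ^ k * Real.exp (lam/2) := by
      rw [← Real.exp_nat_mul, ← Real.exp_add]
      congr 1; ring
    rw [hq, hp]
    simp only [e1 k lam, h2, mul_pow]
    ring
  have hsum1 := Real.summable_pow_div_factorial (lam * Real.exp (1/2 : ℝ))
  have hsum2 := Real.summable_pow_div_factorial (lam * Real.exp (-(1/2) : ℝ))
  have hsummq : Summable q := by
    rw [funext hqeq]
    exact ((hsum1.mul_left (Real.exp (-lam) * Real.exp (-(lam/2)))).congr (fun k => by ring)).add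
      ((hsum2.mul_left (Real.exp (-lam) * Real.exp (lam/2))).congr (fun k => by ring))
  -- value of the sum of q
  have htsumq : ∑' k, q k
      = Real.exp (lam * Real.exp (1/2 : ℝ) - lam - lam/2)
      + Real.exp (lam * Real.exp (-(1/2) : ℝ) - lam + lam/2) := by
    rw [funext hqeq]
    rw [Summable.tsum_add ((hsum1.mul_left (Real.exp (-lam) * Real.exp (-(lam/2)))).congr (fun k => by ring))
      ((hsum2.mul_left (Real.exp (-lam) * Real.exp (lam/2))).congr (fun k => by ring))]
    have t1 : ∑' k : ℕ, (Real.exp (-lam) * Real.exp (-(lam/2)))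
        * (lam * Real.exp (1/2 : ℝ)) ^ k / (Nat.factorial k)
        = (Real.exp (-lam) * Real.exp (-(lam/2))) * Real.exp (lam * Real.exp (1/2 : ℝ)) := by
      rw [← exp_tsum' (lam * Real.exp (1/2 : ℝ)), ← tsum_mul_left]
      exact tsum_congr fun k => by ring
    have t2 : ∑' k : ℕ, (Real.exp (-lam) * Real.exp (lam/2))
        * (lam * Real.exp (-(1/2) : ℝ)) ^ k / (Nat.factorial k)
        = (Real.exp (-lam) * Real.exp (lam/2)) * Real.exp (lam * Real.exp (-(1/2) : ℝ)) := by
      rw [← exp_tsum' (lam * Real.exp (-(1/2) : ℝ)), ← tsum_mul_left]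
      exact tsum_congr fun k => by ring
    rw [t1, t2, ← Real.exp_add, ← Real.exp_add, ← Real.exp_add, ← Real.exp_add]
    congr 1 <;> ring
  have htqle : ∑' k, q k ≤ 2 * Real.exp (3 * lam / 20) := by
    rw [htsumq]
    have b1 : Real.exp (lam * Real.exp (1/2 : ℝ) - lam - lam/2)
        ≤ Real.exp (3 * lam / 20) := by
      apply Real.exp_le_exp.2
      nlinarith [exp_half_le, hlam]
    have b2 : Real.exp (lam * Real.exp (-(1/2) : ℝ) - lam + lam/2)
        ≤ Real.exp (3 * lam / 20) := by
      apply Real.exp_le_exp.2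
      nlinarith [exp_neg_half_le, hlam]
    linarith
  calc ∫⁻ ω, ENNReal.ofReal (Real.exp (|(X ω : ℝ) - lam| / 2)) ∂μ
      ≤ ∫⁻ ω, ∑' k, Set.indicator (t k) (fun _ => c k) ω ∂μ := lintegral_mono hle
    _ = ∑' k, ∫⁻ ω, Set.indicator (t k) (fun _ => c k) ω ∂μ :=
        lintegral_tsum fun k =>
          (measurable_const.indicator (measurableSet_toMeasurable μ _)).aemeasurable
    _ = ∑' k, c k * μ (s k) := by
        refine tsum_congr fun k => ?_
        rw [lintegral_indicator (measurableSet_toMeasurable μ _) _, setLIntegral_const,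
          measure_toMeasurable]
    _ ≤ ∑' k, ENNReal.ofReal (q k) := by
        refine ENNReal.tsum_le_tsum fun k => ?_
        rw [hX k, hc]
        rw [← ENNReal.ofReal_mul (Real.exp_pos _).le]
        apply ENNReal.ofReal_le_ofReal
        have hexp : Real.exp (|(k : ℝ) - lam| / 2)
            ≤ Real.exp (((k : ℝ) - lam)/2) + Real.exp (-(((k : ℝ) - lam))/2) := by
          rcases abs_cases ((k : ℝ) - lam) with ⟨h, _⟩ | ⟨h, _⟩ <;> rw [h]
          · exact le_add_of_nonneg_right (Real.exp_pos _).le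
          · exact le_add_of_nonneg_left (Real.exp_pos _).le
        calc Real.exp (|(k : ℝ) - lam| / 2) * p k
            ≤ (Real.exp (((k : ℝ) - lam)/2) + Real.exp (-(((k : ℝ) - lam))/2)) * p k :=
              mul_le_mul_of_nonneg_right hexp (hpnn k)
          _ = q k := by rw [hq]; ring
    _ = ENNReal.ofReal (∑' k, q k) := (ENNReal.ofReal_tsum_of_nonneg hqnn hsummq).symm
    _ ≤ ENNReal.ofReal (2 * Real.exp (3 * lam / 20)) := ENNReal.ofReal_le_ofReal htqle
end

section
/- There exists a universal constant D > 0 such that for every real t ≥ 1/2, every integer j with |j| ≤ √(8t), and every pair of independent random variables X and Y each having the Poisson distribution with parameter t, one has P((X : ℤ) − (Y : ℤ) = j) ≥ 2·D / √t. -/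
/-!
Stirling's bound `n! ≤ e √n (n/e)^n` together with `log x ≥ 1 - 1/x` shows that the Poisson(t)
weight of `n ≥ 1` is at least `exp (-(n - t)^2 / t) / (e √n)`, so it is of order `1/√t` on the
window `t ≤ n ≤ t + 5√t`. Write `j = a - b` with `a = j⁺` and `b = j⁻`, both at most `|j| ≤ 3√t`. The event
`X - Y = j` contains the events `X = m + a ∧ Y = m + b` for the `⌊2√t⌋` integers
`m ∈ [⌈t⌉, t + 2√t)`; by independence each has probability of order `1/t`, and together they
give order `1/√t`.
-/

open MeasureTheory

open Real Finset ProbabilityTheory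
open scoped Nat ENNReal

theorem Stirling.factorial_le_exp_one_mul_sqrt_mul_pow {n : ℕ} (hn : n ≠ 0) :
    (n ! : ℝ) ≤ exp 1 * √n * (n / exp 1) ^ n := by
  have hle : stirlingSeq n ≤ stirlingSeq 1 := by
    obtain ⟨m, rfl⟩ := Nat.exists_eq_succ_of_ne_zero hn
    exact stirlingSeq'_antitone (Nat.zero_le m)
  rw [stirlingSeq, stirlingSeq_one, div_le_iff₀ (by positivity), sqrt_mul zero_le_two] at hle
  refine hle.trans_eq ?_
  field_simp

theorem exp_neg_sq_div_le_poisson {t : ℝ} (ht : 0 < t) {n : ℕ} (hn : n ≠ 0) :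
    exp (-((n - t) ^ 2 / t)) / (exp 1 * √n) ≤ exp (-t) * t ^ n / n ! := by
  have hn0 : (0 : ℝ) < n := by positivity
  have hlog : 1 - n / t ≤ log (t / n) := by
    simpa using one_sub_inv_le_log_of_pos (div_pos ht hn0)
  have hexp : exp (-((n - t) ^ 2 / t)) ≤ exp (n - t) * (t / n) ^ n := by
    calc exp (-((n - t) ^ 2 / t)) = exp (n - t) * exp (n * (1 - n / t)) := by
          rw [← exp_add]; congr 1; field_simp; ring
      _ ≤ exp (n - t) * exp (n * log (t / n)) := by gcongr
      _ = exp (n - t) * (t / n) ^ n := by rw [exp_nat_mul, exp_log (by positivity)]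
  calc exp (-((n - t) ^ 2 / t)) / (exp 1 * √n)
      ≤ exp (n - t) * (t / n) ^ n / (exp 1 * √n) := by gcongr
    _ = exp (-t) * t ^ n / (exp 1 * √n * (n / exp 1) ^ n) := by
      rw [exp_sub, ← exp_one_pow, exp_neg, div_pow, div_pow]; field_simp
    _ ≤ exp (-t) * t ^ n / n ! := by
      gcongr
      exact Stirling.factorial_le_exp_one_mul_sqrt_mul_pow hn

theorem IsPoisson.ofReal_le_measure_of_le_of_le {Ω : Type} [MeasurableSpace Ω] {μ : Measure Ω}
    {X : Ω → ℕ} {t : ℝ} (hX : IsPoisson μ X t) (ht : 1 / 2 ≤ t) {n : ℕ} (htn : t ≤ n)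
    (hnt : n ≤ t + 5 * √t) :
    ENNReal.ofReal (exp (-26) / (4 * √t)) ≤ μ {ω | X ω = n} := by
  have ht0 : 0 < t := by linarith
  have hn : n ≠ 0 := (Nat.cast_pos.mp (by linarith : (0 : ℝ) < n)).ne'
  have hsq : (n - t) ^ 2 ≤ 25 * t := by
    have : (5 * √t) ^ 2 = 25 * t := by rw [mul_pow, sq_sqrt ht0.le]; norm_num
    nlinarith [sub_nonneg.mpr htn]
  have hsqrt : √n ≤ 4 * √t := by
    have hst : (2 : ℝ) / 3 ≤ √t := le_sqrt_of_sq_le (by linarith)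
    rw [sqrt_le_iff]
    refine ⟨by positivity, ?_⟩
    rw [mul_pow, sq_sqrt ht0.le]
    nlinarith [sq_sqrt ht0.le]
  rw [hX n]
  apply ENNReal.ofReal_le_ofReal
  calc exp (-26) / (4 * √t) = exp (-25) / (exp 1 * (4 * √t)) := by
        rw [show (-26 : ℝ) = -25 - 1 by norm_num, exp_sub]; field_simp
    _ ≤ exp (-((n - t) ^ 2 / t)) / (exp 1 * √n) := by
        gcongr
        rwa [div_le_iff₀ ht0]
    _ ≤ _ := exp_neg_sq_div_le_poisson ht0 hn

theorem le_and_le_add_two_mul_sqrt_of_mem_Ico {t : ℝ} (ht : 0 ≤ t) {m : ℕ}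
    (hm : m ∈ Ico ⌈t⌉₊ (⌈t⌉₊ + ⌊2 * √t⌋₊)) : t ≤ m ∧ m ≤ t + 2 * √t := by
  obtain ⟨hlo, hhi⟩ := mem_Ico.mp hm
  have hceil : (⌈t⌉₊ : ℝ) < t + 1 := Nat.ceil_lt_add_one ht
  have hfloor : (⌊2 * √t⌋₊ : ℝ) ≤ 2 * √t := Nat.floor_le (by positivity)
  have hhi' : (m : ℝ) + 1 ≤ ⌈t⌉₊ + ⌊2 * √t⌋₊ := by exact_mod_cast hhi
  exact ⟨(Nat.le_ceil t).trans (by exact_mod_cast hlo), by linarith⟩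

theorem IsPoisson.ofReal_le_measure_add_of_mem_Ico {Ω : Type} [MeasurableSpace Ω]
    {μ : Measure Ω} {X : Ω → ℕ} {t : ℝ} (hX : IsPoisson μ X t) (ht : 1 / 2 ≤ t) {m k : ℕ}
    (hm : m ∈ Ico ⌈t⌉₊ (⌈t⌉₊ + ⌊2 * √t⌋₊)) (hk : k ≤ 3 * √t) :
    ENNReal.ofReal (exp (-26) / (4 * √t)) ≤ μ {ω | X ω = m + k} := by
  obtain ⟨htm, hmt⟩ := le_and_le_add_two_mul_sqrt_of_mem_Ico (by linarith) hm
  refine hX.ofReal_le_measure_of_le_of_le ht ?_ ?_ <;> push_cast <;>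
    linarith [k.cast_nonneg (α := ℝ)]

/-- The sets `A i` need not be measurable, so `μ E` is bounded through subadditivity on `Eᶜ`
rather than additivity on `E`. -/
theorem measure_sum_le_of_compl_subset_iUnion {Ω ι : Type*} [MeasurableSpace Ω] [Countable ι]
    (μ : Measure Ω) [IsProbabilityMeasure μ] (A : ι → Set Ω) (hA : ∑' i, μ (A i) ≤ 1)
    (T : Finset ι) {E : Set Ω} (hE : Eᶜ ⊆ ⋃ i ∈ (T : Set ι)ᶜ, A i) :
    ∑ i ∈ T, μ (A i) ≤ μ E := by
  have hrest : μ Eᶜ ≤ ∑' i : ↥(T : Set ι)ᶜ, μ (A i) :=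
    (measure_mono hE).trans (measure_biUnion_le μ (Set.to_countable _) A)
  have hrest_ne_top : ∑' i : ↥(T : Set ι)ᶜ, μ (A i) ≠ ∞ :=
    ne_top_of_le_ne_top ENNReal.one_ne_top
      ((ENNReal.sum_add_tsum_compl T _).trans_le hA |>.trans' le_add_self)
  refine (ENNReal.add_le_add_iff_right hrest_ne_top).mp ?_
  calc ∑ i ∈ T, μ (A i) + ∑' i : ↥(T : Set ι)ᶜ, μ (A i) ≤ 1 :=
        (ENNReal.sum_add_tsum_compl T _).trans_le hA
    _ = μ (E ∪ Eᶜ) := by rw [Set.union_compl_self, measure_univ]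
    _ ≤ μ E + μ Eᶜ := measure_union_le E Eᶜ
    _ ≤ μ E + ∑' i : ↥(T : Set ι)ᶜ, μ (A i) := by gcongr

theorem IsPoisson.tsum_measure_eq_one {Ω : Type} [MeasurableSpace Ω] {μ : Measure Ω}
    {X : Ω → ℕ} {t : ℝ} (hX : IsPoisson μ X t) (ht : 0 ≤ t) :
    ∑' k, μ {ω | X ω = k} = 1 := by
  have hsum : HasSum (fun k : ℕ ↦ exp (-t) * t ^ k / k !) 1 :=
    hasSum_one_poissonMeasure ⟨t, ht⟩
  rw [tsum_congr hX, ← ENNReal.ofReal_tsum_of_nonneg (fun k ↦ by positivity) hsum.summable,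
    hsum.tsum_eq, ENNReal.ofReal_one]

theorem ProbabilityTheory.IndepFun.sum_measure_mul_le_measure_sub_eq {Ω : Type*}
    [MeasurableSpace Ω] {μ : Measure Ω} [IsProbabilityMeasure μ] {X Y : Ω → ℕ}
    (hXY : IndepFun X Y μ)
    (hX : ∑' k, μ {ω | X ω = k} ≤ 1) (hY : ∑' k, μ {ω | Y ω = k} ≤ 1) {j : ℤ}
    (T : Finset (ℕ × ℕ)) (hT : ∀ q ∈ T, (q.1 : ℤ) - q.2 = j) :
    ∑ q ∈ T, μ {ω | X ω = q.1} * μ {ω | Y ω = q.2} ≤ μ {ω | (X ω : ℤ) - Y ω = j} := by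
  have hprod (q : ℕ × ℕ) :
      μ (X ⁻¹' {q.1} ∩ Y ⁻¹' {q.2}) = μ {ω | X ω = q.1} * μ {ω | Y ω = q.2} :=
    hXY.measure_inter_preimage_eq_mul _ _ (measurableSet_singleton _) (measurableSet_singleton _)
  simp_rw [← hprod]
  refine measure_sum_le_of_compl_subset_iUnion μ _ ?_ T ?_
  · simp_rw [hprod]
    rw [ENNReal.tsum_prod']
    simp_rw [ENNReal.tsum_mul_left, ENNReal.tsum_mul_right]
    exact (mul_le_mul' hX hY).trans_eq (one_mul 1)
  · intro ω hω
    refine Set.mem_biUnion (x := (X ω, Y ω)) (fun hmem ↦ hω ?_) ⟨rfl, rfl⟩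
    exact hT _ hmem

theorem sq_div_le_floor_two_mul_sqrt_mul_sq {t : ℝ} (ht : 4 / 9 ≤ t) (a : ℝ) :
    a ^ 2 / 32 / √t ≤ ⌊2 * √t⌋₊ * (a / (4 * √t)) ^ 2 := by
  have hst : (2 : ℝ) / 3 ≤ √t := le_sqrt_of_sq_le (by linarith)
  have hfloor : √t / 2 ≤ ⌊2 * √t⌋₊ := by linarith [Nat.lt_floor_add_one (2 * √t)]
  calc a ^ 2 / 32 / √t = √t / 2 * (a / (4 * √t)) ^ 2 := by
        field_simp
        ring
    _ ≤ ⌊2 * √t⌋₊ * (a / (4 * √t)) ^ 2 := by gcongr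

theorem skellam_local_limit_lower_bound :
    ∃ D > (0 : ℝ), ∀ t : ℝ, (1 : ℝ) / 2 ≤ t →
      ∀ j : ℤ, |(j : ℝ)| ≤ Real.sqrt (8 * t) →
        ∀ (Ω : Type) [MeasurableSpace Ω] (μ : Measure Ω) [IsProbabilityMeasure μ]
          (X Y : Ω → ℕ), IsPoisson μ X t → IsPoisson μ Y t →
            ProbabilityTheory.IndepFun X Y μ →
            ENNReal.ofReal (2 * D / Real.sqrt t) ≤ μ {ω | (X ω : ℤ) - (Y ω : ℤ) = j} := by
  refine ⟨exp (-26) ^ 2 / 64, by positivity, ?_⟩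
  intro t ht j hj Ω _ μ _ X Y hX hY hXY
  set S := Ico ⌈t⌉₊ (⌈t⌉₊ + ⌊2 * √t⌋₊)
  set c := ENNReal.ofReal (exp (-26) / (4 * √t))
  have hshift {k : ℕ} (hk : k ≤ j.natAbs) : (k : ℝ) ≤ 3 * √t := by
    have h9 : √(9 * t) = 3 * √t := by
      rw [sqrt_mul' _ (by linarith), show (9 : ℝ) = 3 ^ 2 by norm_num, sqrt_sq (by norm_num)]
    calc (k : ℝ) ≤ |(j : ℝ)| := by rw [← Int.cast_abs, ← Nat.cast_natAbs]; exact_mod_cast hk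
      _ ≤ 3 * √t := hj.trans (h9 ▸ sqrt_le_sqrt (by linarith))
  have hterm : ∀ m ∈ S, c * c ≤ μ {ω | X ω = m + j.toNat} * μ {ω | Y ω = m + (-j).toNat} :=
    fun m hm ↦ mul_le_mul' (hX.ofReal_le_measure_add_of_mem_Ico ht hm (hshift (by omega)))
      (hY.ofReal_le_measure_add_of_mem_Ico ht hm (hshift (by omega)))
  calc ENNReal.ofReal (2 * (exp (-26) ^ 2 / 64) / √t) ≤ #S • (c * c) := by
        rw [← ENNReal.ofReal_mul (by positivity), ← ENNReal.ofReal_nsmul, Nat.card_Ico,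
          add_tsub_cancel_left, nsmul_eq_mul, ← sq]
        refine ENNReal.ofReal_le_ofReal ?_
        convert sq_div_le_floor_two_mul_sqrt_mul_sq (t := t) (by linarith) (exp (-26)) using 1
        ring
    _ ≤ ∑ m ∈ S, μ {ω | X ω = m + j.toNat} * μ {ω | Y ω = m + (-j).toNat} :=
        card_nsmul_le_sum _ _ _ hterm
    _ = ∑ q ∈ S.image fun m ↦ (m + j.toNat, m + (-j).toNat),
          μ {ω | X ω = q.1} * μ {ω | Y ω = q.2} := by
        rw [sum_image fun _ _ _ _ h ↦ by simpa using h]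
    _ ≤ μ {ω | (X ω : ℤ) - (Y ω : ℤ) = j} :=
        hXY.sum_measure_mul_le_measure_sub_eq (hX.tsum_measure_eq_one (by linarith)).le
          (hY.tsum_measure_eq_one (by linarith)).le _ (by simp)
end

section
/- Let d ≥ 1 and L ≥ 2 be integers, and let G be the torus graph on (ZMod L)^d. For distinct vertices u, v, let P(u, v) denote the (finite, nonempty) set of geodesics from u to v, i.e., walks from u to v in G whose length equals dist_G(u, v); for an edge e of G, let N_e(u, v) be the number of geodesics in P(u, v) that traverse e (i.e., whose edge list contains e), and let N(u, v) = |P(u, v)|. Then for every edge e of G, the sum over all ordered pairs (u, v) of distinct vertices of the ratio N_e(u, v) / N(u, v) (as a real number) is at most L·(L^d − 1). -/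
/-- The torus graph on `(ZMod L)^d`: distinct vertices `u, v` are adjacent iff there is a
coordinate `i` with `v = u + Pi.single i 1` or `v = u + Pi.single i (-1)`. -/
def torusGraph (d L : ℕ) : SimpleGraph (Fin d → ZMod L) where
  Adj u v := u ≠ v ∧ ∃ i : Fin d, v = u + Pi.single i 1 ∨ v = u + Pi.single i (-1)
  symm := by
    constructor
    rintro u v ⟨hne, i, h | h⟩
    · exact ⟨hne.symm, i, Or.inr (by simp [h, Pi.single_neg, sub_eq_add_neg])⟩
    · exact ⟨hne.symm, i, Or.inl (by simp [h, Pi.single_neg, sub_eq_add_neg])⟩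
  loopless := ⟨fun u h => h.1 rfl⟩

/-- The number of geodesics (shortest walks) from `u` to `v` in the torus graph. -/
noncomputable def geodesicCount (d L : ℕ) (u v : Fin d → ZMod L) : ℕ :=
  {p : (torusGraph d L).Walk u v | p.length = (torusGraph d L).dist u v}.ncard

/-- The number of geodesics from `u` to `v` in the torus graph that traverse the edge `e`. -/
noncomputable def geodesicCountThrough (d L : ℕ) (u v : Fin d → ZMod L)
    (e : Sym2 (Fin d → ZMod L)) : ℕ :=
  {p : (torusGraph d L).Walk u v |
    p.length = (torusGraph d L).dist u v ∧ e ∈ p.edges}.ncard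



/-!
Translations `x ↦ x + t` are automorphisms of the torus, so `N(u, u + w) = N(0, w)` and
`N_e(u, u + w) = N_{e - u}(0, w)`. For fixed `w ≠ 0`, the sum of the `N_e(u, u + w)` over `u`
therefore counts the pairs (geodesic `p` from `0` to `w`, translate `e + t` lying on `p`).
The distance is `∑ᵢ |wᵢ|`, where `|x|` is the circular absolute value on `ZMod L`
(`x.valMinAbs.natAbs`), so a geodesic makes exactly `|wᵢ| ≤ L / 2` steps in each coordinate `i`.
If `e` points in direction `i`, every translate of `e` on `p` is one of these steps, and each step
is `e + t` for at most two `t`; so `p` carries at most `L` translates of `e`. Dividing by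
`N(0, w)`, the inner sum is at most `L` for each of the `L ^ d - 1` nonzero `w`.
-/

open Finset

namespace SimpleGraph

variable {V W : Type*} {G : SimpleGraph V} {H : SimpleGraph W}

def Iso.mapWalk (φ : G ≃g H) (u v : V) : G.Walk u v ≃ H.Walk (φ u) (φ v) where
  toFun p := p.map φ.toHom
  invFun q := (q.map φ.symm.toHom).copy (φ.symm_apply_apply u) (φ.symm_apply_apply v)
  left_inv p := Walk.ext_support <| by
    simp only [Walk.support_copy, Walk.support_map, List.map_map]
    simp [Function.comp_def]
  right_inv q := Walk.ext_support <| by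
    simp only [Walk.support_copy, Walk.support_map, List.map_map]
    simp [Function.comp_def]

lemma Iso.length_mapWalk (φ : G ≃g H) {u v : V} (p : G.Walk u v) :
    (φ.mapWalk u v p).length = p.length :=
  Walk.length_map _ _

lemma Iso.map_mem_edges_mapWalk (φ : G ≃g H) {u v : V} (p : G.Walk u v) (e : Sym2 V) :
    e.map φ ∈ (φ.mapWalk u v p).edges ↔ e ∈ p.edges :=
  (Walk.edges_map _ _).symm ▸ List.mem_map_of_injective (Sym2.map.injective φ.injective)

lemma Iso.dist_map (φ : G ≃g H) (u v : V) : H.dist (φ u) (φ v) = G.dist u v := by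
  rw [dist_eq_sInf, dist_eq_sInf, ← (φ.mapWalk u v).surjective.range_comp]
  congr 2
  exact funext φ.length_mapWalk

lemma Iso.ncard_setOf_walk (φ : G ≃g H) {u v : V} (P : H.Walk (φ u) (φ v) → Prop) :
    {q | P q}.ncard = {p : G.Walk u v | P (φ.mapWalk u v p)}.ncard :=
  (Set.ncard_preimage_of_injective_subset_range (φ.mapWalk u v).injective (by simp)).symm

lemma Iso.ncard_geodesics (φ : G ≃g H) (u v : V) :
    {q : H.Walk (φ u) (φ v) | q.length = H.dist (φ u) (φ v)}.ncard =
      {p : G.Walk u v | p.length = G.dist u v}.ncard := by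
  simp only [φ.ncard_setOf_walk, φ.length_mapWalk, φ.dist_map]

lemma Iso.ncard_geodesics_through (φ : G ≃g H) (u v : V) (e : Sym2 V) :
    {q : H.Walk (φ u) (φ v) | q.length = H.dist (φ u) (φ v) ∧ e.map φ ∈ q.edges}.ncard =
      {p : G.Walk u v | p.length = G.dist u v ∧ e ∈ p.edges}.ncard := by
  simp only [φ.ncard_setOf_walk, φ.length_mapWalk, φ.dist_map, φ.map_mem_edges_mapWalk]

end SimpleGraph

lemma Sym2.card_filter_mk_add_eq_le_two {A : Type*} [AddGroup A] [Fintype A] [DecidableEq A]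
    (a b : A) (z : Sym2 A) : #{t | s(a + t, b + t) = z} ≤ 2 := by
  induction z using Sym2.ind with | _ x y => ?_
  refine (card_le_card fun t ht => ?_).trans (card_le_two (a := -a + x) (b := -a + y))
  have : a + t ∈ s(x, y) := (mem_filter.1 ht).2 ▸ Sym2.mem_mk_left _ _
  rcases Sym2.mem_iff.1 this with h | h <;> simp [← h]

namespace SimpleGraph.Walk

variable {ι A : Type*} [DecidableEq A] {G : SimpleGraph (ι → A)} {u v w : ι → A}

def numStepsIn (p : G.Walk u v) (i : ι) : ℕ :=
  p.darts.countP (fun δ => δ.fst i ≠ δ.snd i)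

@[simp]
lemma numStepsIn_nil (i : ι) : (nil : G.Walk u u).numStepsIn i = 0 := rfl

lemma numStepsIn_cons (h : G.Adj u w) (p : G.Walk w v) (i : ι) :
    (cons h p).numStepsIn i = p.numStepsIn i + if u i ≠ w i then 1 else 0 := by
  simp [numStepsIn, List.countP_cons]

lemma card_filter_mk_add_mem_edges_le [AddGroup A] [Fintype ι] [DecidableEq ι] [Fintype A]
    (p : G.Walk u v) {a b : ι → A} {j : ι} (hab : a j ≠ b j) :
    #{t | s(a + t, b + t) ∈ p.edges} ≤ 2 * p.numStepsIn j := by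
  set D := (p.darts.filter fun δ => δ.fst j ≠ δ.snd j).toFinset
  have hsub : ({t | s(a + t, b + t) ∈ p.edges} : Finset (ι → A)) ⊆
      D.biUnion fun δ => {t | s(a + t, b + t) = δ.edge} := by
    intro t ht
    obtain ⟨δ, hδ, hδt⟩ := List.mem_map.1 (mem_filter.1 ht).2
    have hδj : δ.fst j ≠ δ.snd j := by
      rcases Sym2.eq_iff.1 hδt with ⟨h₁, h₂⟩ | ⟨h₁, h₂⟩ <;> simpa [h₁, h₂, eq_comm] using hab
    simp only [mem_biUnion, mem_filter, mem_univ, true_and, D, List.mem_toFinset, List.mem_filter]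
    exact ⟨δ, ⟨hδ, by simpa using hδj⟩, hδt.symm⟩
  calc #{t | s(a + t, b + t) ∈ p.edges}
      ≤ #D * 2 := (card_le_card hsub).trans
        (card_biUnion_le_card_mul _ _ _ fun δ _ => Sym2.card_filter_mk_add_eq_le_two a b δ.edge)
    _ ≤ 2 * p.numStepsIn j := by
      rw [mul_comm, numStepsIn, List.countP_eq_length_filter]
      exact Nat.mul_le_mul_left 2 (List.toFinset_card_le _)

end SimpleGraph.Walk

lemma ZMod.natAbs_valMinAbs_add_le_add {n : ℕ} (a b : ZMod n) :
    (a + b).valMinAbs.natAbs ≤ a.valMinAbs.natAbs + b.valMinAbs.natAbs :=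
  (ZMod.natAbs_valMinAbs_add_le a b).trans (Int.natAbs_add_le _ _)

lemma ZMod.natAbs_valMinAbs_one_le {n : ℕ} [NeZero n] : (1 : ZMod n).valMinAbs.natAbs ≤ 1 :=
  ZMod.natAbs_min_of_le_div_two n _ 1 (by simp [ZMod.coe_valMinAbs]) (ZMod.natAbs_valMinAbs_le _)

lemma ne_zero_of_eq_one_or_eq_neg_one {R : Type*} [Ring R] [Nontrivial R] {s : R}
    (hs : s = 1 ∨ s = -1) : s ≠ 0 := by
  rcases hs with rfl | rfl <;> simp

namespace torusGraph

open SimpleGraph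

variable {d L : ℕ}

instance : DecidableRel (torusGraph d L).Adj := fun u v =>
  inferInstanceAs (Decidable (u ≠ v ∧ ∃ i, v = u + Pi.single i 1 ∨ v = u + Pi.single i (-1)))

def translate (t : Fin d → ZMod L) : torusGraph d L ≃g torusGraph d L where
  toEquiv := Equiv.addRight t
  map_rel_iff' {u v} := by
    simp [torusGraph, add_right_comm _ t]

lemma exists_eq_add_single_of_adj {u v : Fin d → ZMod L} (h : (torusGraph d L).Adj u v) :
    ∃ j s, (s = 1 ∨ s = -1) ∧ v = u + Pi.single j s := by
  obtain ⟨-, j, hj | hj⟩ := h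
  exacts [⟨j, 1, .inl rfl, hj⟩, ⟨j, -1, .inr rfl, hj⟩]

section

variable [Nontrivial (ZMod L)]

lemma adj_add_single (u : Fin d → ZMod L) (i : Fin d) {s : ZMod L} (hs : s = 1 ∨ s = -1) :
    (torusGraph d L).Adj u (u + Pi.single i s) := by
  refine ⟨fun h => ne_zero_of_eq_one_or_eq_neg_one hs ?_, i, by rcases hs with rfl | rfl <;> simp⟩
  simpa using congrFun h i

lemma exists_ne_iff_of_adj {u v : Fin d → ZMod L} (h : (torusGraph d L).Adj u v) :
    ∃ j, ∀ i, u i ≠ v i ↔ i = j := by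
  obtain ⟨j, s, hs, rfl⟩ := exists_eq_add_single_of_adj h
  refine ⟨j, fun i => ?_⟩
  rcases eq_or_ne i j with rfl | hij
  · simpa using ne_zero_of_eq_one_or_eq_neg_one hs
  · simp [hij]

lemma exists_walk_add_single_intCast (u : Fin d → ZMod L) (i : Fin d) (k : ℤ) :
    ∃ p : (torusGraph d L).Walk u (u + Pi.single i (k : ZMod L)), p.length = k.natAbs := by
  induction k using Int.induction_on with
  | zero => exact ⟨Walk.nil.copy rfl (by simp), by rw [Walk.length_copy]; rfl⟩
  | succ k ih =>
    obtain ⟨p, hp⟩ := ih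
    refine ⟨(p.concat (adj_add_single _ i (.inl rfl))).copy rfl ?_, ?_⟩
    · simp [add_assoc, ← Pi.single_add]
    · simp only [Walk.length_copy, Walk.length_concat, hp, Int.natAbs_natCast]
      omega
  | pred k ih =>
    obtain ⟨p, hp⟩ := ih
    refine ⟨(p.concat (adj_add_single _ i (.inr rfl))).copy rfl ?_, ?_⟩
    · simp [add_assoc, ← Pi.single_add, sub_eq_add_neg]
    · simp only [Walk.length_copy, Walk.length_concat, hp, Int.natAbs_neg, Int.natAbs_natCast]
      omega

lemma exists_walk_add (u x : Fin d → ZMod L) :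
    ∃ p : (torusGraph d L).Walk u (u + x), p.length = ∑ i, (x i).valMinAbs.natAbs := by
  suffices h : ∀ s : Finset (Fin d), ∃ p : (torusGraph d L).Walk u (u + ∑ i ∈ s, Pi.single i (x i)),
      p.length = ∑ i ∈ s, (x i).valMinAbs.natAbs by
    obtain ⟨p, hp⟩ := h univ
    exact ⟨p.copy rfl (by rw [univ_sum_single]), by simpa using hp⟩
  intro s
  induction s using Finset.induction_on with
  | empty => exact ⟨Walk.nil.copy rfl (by simp), by rw [Walk.length_copy]; rfl⟩
  | insert i s hi ih =>
    obtain ⟨p, hp⟩ := ih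
    obtain ⟨q, hq⟩ := exists_walk_add_single_intCast (u + ∑ i ∈ s, Pi.single i (x i)) i
      (x i).valMinAbs
    refine ⟨(p.append q).copy rfl ?_, ?_⟩
    · rw [ZMod.coe_valMinAbs, sum_insert hi, add_comm (Pi.single i _), add_assoc]
    · simp [hp, hq, sum_insert hi, add_comm]

lemma reachable (u v : Fin d → ZMod L) : (torusGraph d L).Reachable u v := by
  obtain ⟨p, -⟩ := exists_walk_add u (v - u)
  exact ⟨p.copy rfl (add_sub_cancel u v)⟩

lemma dist_le (u v : Fin d → ZMod L) :
    (torusGraph d L).dist u v ≤ ∑ i, (v i - u i).valMinAbs.natAbs := by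
  obtain ⟨p, hp⟩ := exists_walk_add u (v - u)
  simpa [hp] using SimpleGraph.dist_le (p.copy rfl (add_sub_cancel u v))

lemma sum_numStepsIn {u v : Fin d → ZMod L} (p : (torusGraph d L).Walk u v) :
    ∑ i, p.numStepsIn i = p.length := by
  induction p with
  | nil => simp
  | cons h p ih =>
    obtain ⟨j, hj⟩ := exists_ne_iff_of_adj h
    simp [Walk.numStepsIn_cons, sum_add_distrib, ih, hj, add_comm]

end

section

variable [NeZero L]

lemma natAbs_valMinAbs_sub_le_one_of_adj {u v : Fin d → ZMod L} (h : (torusGraph d L).Adj u v)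
    (i : Fin d) : (v i - u i).valMinAbs.natAbs ≤ 1 := by
  obtain ⟨j, s, hs, rfl⟩ := exists_eq_add_single_of_adj h
  rcases eq_or_ne i j with rfl | hij
  · rcases hs with rfl | rfl
    · simpa using ZMod.natAbs_valMinAbs_one_le
    · simpa [ZMod.natAbs_valMinAbs_neg] using ZMod.natAbs_valMinAbs_one_le
  · simp [hij]

lemma natAbs_valMinAbs_sub_le_numStepsIn {u v : Fin d → ZMod L} (p : (torusGraph d L).Walk u v)
    (i : Fin d) : (v i - u i).valMinAbs.natAbs ≤ p.numStepsIn i := by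
  induction p with
  | nil => simp
  | @cons a b c h p ih =>
    rw [Walk.numStepsIn_cons]
    calc (c i - a i).valMinAbs.natAbs
        ≤ (c i - b i).valMinAbs.natAbs + (b i - a i).valMinAbs.natAbs := by
          simpa using ZMod.natAbs_valMinAbs_add_le_add (c i - b i) (b i - a i)
      _ ≤ p.numStepsIn i + if a i ≠ b i then 1 else 0 := by
          split_ifs with hab
          · exact add_le_add ih (natAbs_valMinAbs_sub_le_one_of_adj h i)
          · simpa [not_not.1 hab] using ih

variable [Nontrivial (ZMod L)]

lemma dist_eq (u v : Fin d → ZMod L) :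
    (torusGraph d L).dist u v = ∑ i, (v i - u i).valMinAbs.natAbs := by
  refine le_antisymm (dist_le u v) ?_
  obtain ⟨p, hp⟩ := (reachable u v).exists_walk_length_eq_dist
  rw [← hp, ← sum_numStepsIn p]
  exact sum_le_sum fun i _ => natAbs_valMinAbs_sub_le_numStepsIn p i

lemma numStepsIn_eq_of_length_eq_dist {u v : Fin d → ZMod L} (p : (torusGraph d L).Walk u v)
    (hp : p.length = (torusGraph d L).dist u v) (i : Fin d) :
    p.numStepsIn i = (v i - u i).valMinAbs.natAbs := by
  have hsum : ∑ i, (v i - u i).valMinAbs.natAbs = ∑ i, p.numStepsIn i := by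
    rw [sum_numStepsIn, hp, dist_eq]
  exact ((sum_eq_sum_iff_of_le fun i _ => natAbs_valMinAbs_sub_le_numStepsIn p i).1 hsum i
    (mem_univ i)).symm

lemma card_translates_mem_edges_le {u v : Fin d → ZMod L} (p : (torusGraph d L).Walk u v)
    (hp : p.length = (torusGraph d L).dist u v) {e : Sym2 (Fin d → ZMod L)}
    (he : e ∈ (torusGraph d L).edgeSet) : #{t | e.map (· + t) ∈ p.edges} ≤ L := by
  induction e using Sym2.ind with | _ a b => ?_
  obtain ⟨j, hj⟩ := exists_ne_iff_of_adj he
  calc #{t | Sym2.map (· + t) s(a, b) ∈ p.edges} = #{t | s(a + t, b + t) ∈ p.edges} := rfl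
    _ ≤ 2 * p.numStepsIn j := p.card_filter_mk_add_mem_edges_le ((hj j).2 rfl)
    _ ≤ 2 * (L / 2) := by
      rw [numStepsIn_eq_of_length_eq_dist p hp]
      exact Nat.mul_le_mul_left 2 (ZMod.natAbs_valMinAbs_le _)
    _ ≤ L := Nat.mul_div_le L 2

end

end torusGraph

lemma Fintype.sum_ite_ne_eq_sum_erase_zero {G M : Type*} [AddGroup G] [Fintype G] [DecidableEq G]
    [AddCommMonoid M] (u : G) (f : G → M) :
    ∑ v, (if u ≠ v then f v else 0) = ∑ w ∈ univ.erase 0, f (u + w) := by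
  rw [← Equiv.sum_comp (Equiv.addLeft u) fun v => if u ≠ v then f v else 0, ← sum_filter]
  congr 1
  ext w
  simp

section

variable {d L : ℕ}

lemma geodesicCount_add_right (u v t : Fin d → ZMod L) :
    geodesicCount d L (u + t) (v + t) = geodesicCount d L u v :=
  (torusGraph.translate t).ncard_geodesics u v

lemma geodesicCountThrough_add_right (u v t : Fin d → ZMod L) (e : Sym2 (Fin d → ZMod L)) :
    geodesicCountThrough d L (u + t) (v + t) (e.map (· + t)) = geodesicCountThrough d L u v e :=
  (torusGraph.translate t).ncard_geodesics_through u v e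

variable [NeZero L]

lemma geodesicCount_eq_card (u v : Fin d → ZMod L) :
    geodesicCount d L u v =
      #((torusGraph d L).finsetWalkLength ((torusGraph d L).dist u v) u v) := by
  rw [geodesicCount, ← SimpleGraph.coe_finsetWalkLength_eq, Set.ncard_coe_finset]

lemma geodesicCountThrough_eq_card_filter (u v : Fin d → ZMod L) (e : Sym2 (Fin d → ZMod L)) :
    geodesicCountThrough d L u v e =
      #{p ∈ (torusGraph d L).finsetWalkLength ((torusGraph d L).dist u v) u v | e ∈ p.edges} := by
  rw [geodesicCountThrough, ← Set.ncard_coe_finset]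
  congr
  ext p
  simp [SimpleGraph.mem_finsetWalkLength_iff]

variable [Nontrivial (ZMod L)]

lemma geodesicCount_pos (u v : Fin d → ZMod L) : 0 < geodesicCount d L u v := by
  obtain ⟨p, hp⟩ := (torusGraph.reachable u v).exists_walk_length_eq_dist
  rw [geodesicCount_eq_card]
  exact card_pos.2 ⟨p, SimpleGraph.mem_finsetWalkLength_iff.2 hp⟩

lemma sum_geodesicCountThrough_add_le (w : Fin d → ZMod L) {e : Sym2 (Fin d → ZMod L)}
    (he : e ∈ (torusGraph d L).edgeSet) :
    ∑ u, geodesicCountThrough d L u (u + w) e ≤ L * geodesicCount d L 0 w := by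
  set P := (torusGraph d L).finsetWalkLength ((torusGraph d L).dist 0 w) 0 w
  calc ∑ u, geodesicCountThrough d L u (u + w) e
      = ∑ t, geodesicCountThrough d L 0 w (e.map (· + t)) := by
        refine Fintype.sum_equiv (Equiv.neg _) _ _ fun u => ?_
        rw [← geodesicCountThrough_add_right 0 w u, Sym2.map_map, zero_add, add_comm w]
        simp
    _ = ∑ t, #{p ∈ P | e.map (· + t) ∈ p.edges} := by
        simp_rw [geodesicCountThrough_eq_card_filter, P]
    _ = ∑ p ∈ P, #{t | e.map (· + t) ∈ p.edges} :=
        sum_card_bipartiteAbove_eq_sum_card_bipartiteBelow _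
    _ ≤ ∑ p ∈ P, L := sum_le_sum fun p hp =>
        torusGraph.card_translates_mem_edges_le p (SimpleGraph.mem_finsetWalkLength_iff.1 hp) he
    _ = L * geodesicCount d L 0 w := by rw [sum_const, smul_eq_mul, geodesicCount_eq_card, mul_comm]

lemma sum_geodesicCountThrough_div_le (w : Fin d → ZMod L) {e : Sym2 (Fin d → ZMod L)}
    (he : e ∈ (torusGraph d L).edgeSet) :
    ∑ u, (geodesicCountThrough d L u (u + w) e : ℝ) / geodesicCount d L u (u + w) ≤ L := by
  have hN (u : Fin d → ZMod L) : geodesicCount d L u (u + w) = geodesicCount d L 0 w := by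
    simpa [add_comm] using geodesicCount_add_right 0 w u
  simp_rw [hN, ← sum_div]
  rw [div_le_iff₀ (by exact_mod_cast geodesicCount_pos 0 w)]
  exact_mod_cast sum_geodesicCountThrough_add_le w he

end

theorem torusGraph_flow_congestion_general (d L : ℕ) (hL : 2 ≤ L) [NeZero L]
    (e : Sym2 (Fin d → ZMod L)) (he : e ∈ (torusGraph d L).edgeSet) :
    ∑ u : Fin d → ZMod L, ∑ v : Fin d → ZMod L,
        (if u ≠ v then
          (geodesicCountThrough d L u v e : ℝ) / (geodesicCount d L u v : ℝ)
        else 0)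
      ≤ (L : ℝ) * ((L : ℝ) ^ d - 1) := by
  have : Nontrivial (ZMod L) := ZMod.nontrivial_iff.2 (by omega)
  calc _ = ∑ w ∈ univ.erase 0, ∑ u, (geodesicCountThrough d L u (u + w) e : ℝ) /
        geodesicCount d L u (u + w) := by
        simp_rw [Fintype.sum_ite_ne_eq_sum_erase_zero]
        exact sum_comm
    _ ≤ ∑ w ∈ univ.erase (0 : Fin d → ZMod L), (L : ℝ) :=
        sum_le_sum fun w _ => sum_geodesicCountThrough_div_le w he
    _ = L * (L ^ d - 1) := by
        rw [sum_const, card_erase_of_mem (mem_univ _), card_univ, Fintype.card_fun, ZMod.card,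
          Fintype.card_fin, nsmul_eq_mul, Nat.cast_sub (Nat.one_le_pow _ _ (NeZero.pos L))]
        push_cast
        ring

theorem torusGraph_flow_congestion (d L : ℕ) (hd : 1 ≤ d) (hL : 2 ≤ L) [NeZero L]
    (e : Sym2 (Fin d → ZMod L)) (he : e ∈ (torusGraph d L).edgeSet) :
    ∑ u : Fin d → ZMod L, ∑ v : Fin d → ZMod L,
        (if u ≠ v then
          (geodesicCountThrough d L u v e : ℝ) / (geodesicCount d L u v : ℝ)
        else 0)
      ≤ (L : ℝ) * ((L : ℝ) ^ d - 1) :=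
  torusGraph_flow_congestion_general d L hL e he
end
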